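/- arXiv:2208.06493 — 5 statements merged into one kernel-verified Lean document; each statement's English description precedes it below -/
import Mathlib

section
/- Let f be a germ of a holomorphic diffeomorphism of (ℂ,0) such that f'(0) = 1 and f is not the identity, so f(z) = z + a z^{l+1} + higher order terms with a ≠ 0 and l ≥ 1. Then f has no periodic point other than 0 in any sufficiently small neighborhood of 0; more precisely, there is a neighborhood U of 0 such that no point p ∈ U \ {0} satisfies f^k(p) = p for some k ≥ 1 with all iterates f^j(p), 0 ≤ j ≤ k, remaining in U. -/
/-!
Write `f z = z + z ^ (n + 1) * u z` with `n ≥ 1` and `u 0 = a ≠ 0`. The approximate Fatou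
coordinate `G z = (n a z ^ n)⁻¹` satisfies `G (f z) - G z → -1` as `z → 0`, so on a small
punctured neighbourhood of `0` the real part of `G` strictly decreases along every step of `f`,
and an orbit staying there can never come back to its starting point.
-/

open Filter Topology

namespace Function

variable {α β : Type*} {f : α → α} {p x₀ : α} {k : ℕ}

theorem iterate_ne_of_forall_ne {U : Set α} (hU : ∀ z ∈ U, z ≠ x₀ → f z ≠ x₀) (hp : p ≠ x₀)
    (horb : ∀ j < k, f^[j] p ∈ U) : ∀ j ≤ k, f^[j] p ≠ x₀ := by
  intro j hj
  induction j with
  | zero => exact hp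
  | succ j ih =>
    rw [iterate_succ_apply']
    exact hU _ (horb j hj) (ih (by omega))

theorem iterate_ne_self_of_lt [Preorder β] {V : α → β} {S : Set α}
    (hV : ∀ z ∈ S, V (f z) < V z) (hk : 0 < k) (horb : ∀ j < k, f^[j] p ∈ S) :
    f^[k] p ≠ p := by
  have hdecr : ∀ j < k, V (f^[j + 1] p) < V p := by
    intro j hj
    induction j with
    | zero => exact hV p (horb 0 hj)
    | succ j ih =>
      rw [iterate_succ_apply']
      exact (hV _ (horb _ hj)).trans (ih (by omega))
  obtain ⟨j, rfl⟩ := Nat.exists_eq_add_one_of_ne_zero hk.ne'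
  exact fun h => (hdecr j j.lt_succ_self).ne (by rw [h])

theorem iterate_ne_self_of_forall_ne_lt [Preorder β] {V : α → β} {U : Set α}
    (hU : ∀ z ∈ U, z ≠ x₀ → f z ≠ x₀ ∧ V (f z) < V z) (hp : p ≠ x₀) (hk : 0 < k)
    (horb : ∀ j < k, f^[j] p ∈ U) : f^[k] p ≠ p :=
  have hpunct := iterate_ne_of_forall_ne (fun z hz hz₀ => (hU z hz hz₀).1) hp horb
  iterate_ne_self_of_lt (S := {z | z ∈ U ∧ z ≠ x₀}) (fun z hz => (hU z hz.1 hz.2).2) hk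
    fun j hj => ⟨horb j hj, hpunct j hj.le⟩

end Function

section ApproxFatouCoord

variable {𝕜 : Type*} [NontriviallyNormedField 𝕜]

theorem exists_eventually_eq_add_pow_mul [CharZero 𝕜] [CompleteSpace 𝕜] {f : 𝕜 → 𝕜}
    (hf : AnalyticAt 𝕜 f 0) (hf0 : f 0 = 0) (hf' : deriv f 0 = 1) (hfid : ¬ f =ᶠ[𝓝 0] id) :
    ∃ n ≠ 0, ∃ u : 𝕜 → 𝕜, AnalyticAt 𝕜 u 0 ∧ u 0 ≠ 0 ∧
      ∀ᶠ z in 𝓝 0, f z = z + z ^ (n + 1) * u z := by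
  have hg : AnalyticAt 𝕜 (fun z => f z - z) 0 := hf.sub analyticAt_id
  have hfin : analyticOrderAt (fun z => f z - z) 0 ≠ ⊤ := fun h =>
    hfid ((analyticOrderAt_eq_top.mp h).mono fun z hz => sub_eq_zero.mp hz)
  have htwo : ((2 : ℕ) : ℕ∞) ≤ analyticOrderAt (fun z => f z - z) 0 := by
    rw [natCast_le_analyticOrderAt_iff_iteratedDeriv_eq_zero hg]
    intro i hi
    interval_cases i
    · simp [hf0]
    · simp [deriv_fun_sub hf.differentiableAt differentiableAt_fun_id, hf']
  obtain ⟨m, hm⟩ := ENat.ne_top_iff_exists.mp hfin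
  have hm2 : 2 ≤ m := by rwa [← hm, Nat.cast_le] at htwo
  obtain ⟨u, hu, hu0, hfu⟩ := hg.analyticOrderAt_eq_natCast.mp hm.symm
  obtain ⟨n, rfl⟩ : ∃ n, m = n + 1 := ⟨m - 1, by omega⟩
  refine ⟨n, by omega, u, hu, hu0, ?_⟩
  filter_upwards [hfu] with z hz
  rw [sub_zero, smul_eq_mul] at hz
  linear_combination hz

def approxFatouCoord (n : ℕ) (a z : 𝕜) : 𝕜 := (n * a * z ^ n)⁻¹

theorem approxFatouCoord_mul (n : ℕ) (a z w : 𝕜) :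
    approxFatouCoord n a (z * w) = approxFatouCoord n a z * (w ^ n)⁻¹ := by
  simp only [approxFatouCoord, mul_pow, ← mul_assoc, mul_inv]

theorem hasDerivAt_inv_one_add_pow (n : ℕ) :
    HasDerivAt (fun t : 𝕜 => ((1 + t) ^ n)⁻¹) (-n) 0 := by
  simpa using (((hasDerivAt_id (0 : 𝕜)).const_add 1).fun_pow n).fun_inv (by simp)

theorem tendsto_approxFatouCoord_comp_sub [CharZero 𝕜] {f u : 𝕜 → 𝕜} {n : ℕ} (hn : n ≠ 0)
    (hu : ContinuousAt u 0) (hu0 : u 0 ≠ 0) (hf : ∀ᶠ z in 𝓝 0, f z = z + z ^ (n + 1) * u z) :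
    Tendsto (fun z => approxFatouCoord n (u 0) (f z) - approxFatouCoord n (u 0) z)
      (𝓝[≠] 0) (𝓝 (-1)) := by
  set g : 𝕜 → 𝕜 := fun t => ((1 + t) ^ n)⁻¹
  -- `H z = G (f z) - G z` for `z ≠ 0`; `dslope` rather than `slope` makes `H` continuous at `0`.
  set H : 𝕜 → 𝕜 := fun z => (n * u 0)⁻¹ * u z * dslope g 0 (z ^ n * u z)
  have hH : ContinuousAt H 0 := by
    have hslope : ContinuousAt (dslope g 0) 0 :=
      continuousAt_dslope_same.mpr (hasDerivAt_inv_one_add_pow n).differentiableAt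
    have ht : ContinuousAt (fun z : 𝕜 => z ^ n * u z) 0 := by fun_prop
    exact (continuousAt_const.mul hu).mul (hslope.comp_of_eq ht (by simp [hn]))
  have hH0 : H 0 = -1 := by
    simp only [H, zero_pow hn, zero_mul, dslope_same]
    rw [(hasDerivAt_inv_one_add_pow n).deriv]
    field_simp
  have hfH : H =ᶠ[𝓝[≠] 0]
      fun z => approxFatouCoord n (u 0) (f z) - approxFatouCoord n (u 0) z := by
    filter_upwards [eventually_nhdsWithin_of_eventually_nhds hf, self_mem_nhdsWithin]
      with z hfz (hz : z ≠ 0)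
    have hslope : z ^ n * u z * dslope g 0 (z ^ n * u z) = g (z ^ n * u z) - g 0 := by
      simpa using sub_smul_dslope g 0 (z ^ n * u z)
    have hfz' : f z = z * (1 + z ^ n * u z) := by rw [hfz]; ring
    calc H z = approxFatouCoord n (u 0) z * (z ^ n * u z * dslope g 0 (z ^ n * u z)) := by
          simp only [H, approxFatouCoord]; field_simp
      _ = approxFatouCoord n (u 0) (f z) - approxFatouCoord n (u 0) z := by
          rw [hslope, hfz', approxFatouCoord_mul]
          simp only [g, add_zero, one_pow, inv_one]
          ring
  rw [← hH0]
  exact (hH.tendsto.mono_left nhdsWithin_le_nhds).congr' hfH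

end ApproxFatouCoord

/-- A germ of holomorphic diffeomorphism of `(ℂ,0)` tangent to the identity
(`f'(0) = 1`) but not equal to the identity germ has no periodic point other
than `0` in a sufficiently small neighborhood of `0`
(Leau–Fatou / Camacho's topological description of parabolic germs). -/
theorem parabolic_germ_no_periodic_points
    (f : ℂ → ℂ) (hf : AnalyticAt ℂ f 0) (hf0 : f 0 = 0)
    (hf' : deriv f 0 = 1) (hfid : ¬ (f =ᶠ[nhds (0 : ℂ)] id)) :
    ∃ U ∈ nhds (0 : ℂ), ∀ p ∈ U, p ≠ 0 →
      ∀ k : ℕ, 1 ≤ k → (∀ j ≤ k, f^[j] p ∈ U) → f^[k] p ≠ p := by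
  obtain ⟨n, hn, u, hu, hu0, hfu⟩ := exists_eventually_eq_add_pow_mul hf hf0 hf' hfid
  set G := approxFatouCoord n (u 0)
  have hdecr : ∀ᶠ z in 𝓝[≠] 0, (G (f z)).re < (G z).re := by
    have hre := (Complex.continuous_re.tendsto _).comp
      (tendsto_approxFatouCoord_comp_sub hn hu.continuousAt hu0 hfu)
    filter_upwards [hre.eventually_lt_const (by norm_num : (-1 : ℂ).re < 0)] with z hz
    simpa using hz
  have hne : ∀ᶠ z in 𝓝[≠] 0, f z ≠ 0 := by
    simpa [hf0] using hf.differentiableAt.hasDerivAt.eventually_ne (hf' ▸ one_ne_zero)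
  obtain ⟨U, hU, hUdecr⟩ := (eventually_nhdsWithin_iff.mp (hne.and hdecr)).exists_mem
  exact ⟨U, hU, fun p _ hp0 k hk horb => Function.iterate_ne_self_of_forall_ne_lt
    (V := fun z => (G z).re) hUdecr hp0 hk fun j hj => horb j hj.le⟩
end

section
/- Let f be a germ of a holomorphic diffeomorphism of (ℂ,0) with f'(0) a root of unity. Suppose there exist a positive integer k and a sequence of points p_ν ≠ 0 converging to 0 such that the forward orbit {f^n(p_ν) : n ∈ ℕ} of each p_ν is a finite set with at most k elements. Then f has finite order: f^m = Id as germs for some positive integer m. -/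
/-- Lemma 2.2: a germ of holomorphic diffeomorphism of `(ℂ,0)` whose linear part
is a root of unity and which admits a sequence of nonzero points accumulating at
`0` whose forward orbits are finite of uniformly bounded cardinality has finite
order: some iterate is the identity germ. -/
theorem holo_germ_bounded_orbits_finite_order
    (f : ℂ → ℂ) (hf : AnalyticAt ℂ f 0) (hf0 : f 0 = 0)
    (hroot : ∃ n : ℕ, 0 < n ∧ (deriv f 0) ^ n = 1)
    (k : ℕ) (hk : 0 < k)
    (p : ℕ → ℂ) (hpne : ∀ ν, p ν ≠ 0)
    (hlim : Filter.Tendsto p Filter.atTop (nhds (0 : ℂ)))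
    (horb : ∀ ν, (Set.range fun n : ℕ => f^[n] (p ν)).Finite ∧
      (Set.range fun n : ℕ => f^[n] (p ν)).ncard ≤ k) :
    ∃ m : ℕ, 0 < m ∧ f^[m] =ᶠ[nhds (0 : ℂ)] id := by
  classical
  obtain ⟨n, hn, hrootn⟩ := hroot
  have hc0 : deriv f 0 ≠ 0 := by
    intro h
    rw [h, zero_pow hn.ne'] at hrootn
    exact zero_ne_one hrootn
  have hfix : ∀ m : ℕ, f^[m] 0 = 0 := fun m => Function.iterate_fixed hf0 m
  -- iterates are analytic at 0
  have hana : ∀ m : ℕ, AnalyticAt ℂ f^[m] 0 := by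
    intro m
    induction m with
    | zero => exact analyticAt_id
    | succ m ih =>
      rw [Function.iterate_succ']
      exact AnalyticAt.comp (by rw [hfix m]; exact hf) ih
  -- derivative of iterates at 0
  have hder : ∀ m : ℕ, HasDerivAt f^[m] ((deriv f 0) ^ m) 0 := by
    intro m
    induction m with
    | zero => simpa using hasDerivAt_id (0 : ℂ)
    | succ m ih =>
      rw [Function.iterate_succ']
      have h1 : HasDerivAt f (deriv f 0) (f^[m] 0) := by
        rw [hfix m]; exact hf.differentiableAt.hasDerivAt
      have := h1.comp 0 ih
      simpa [pow_succ, mul_comm] using this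
  -- for each ν, two iterates among the first k+1 coincide
  have key : ∀ ν, ∃ q : Fin (k + 1) × Fin (k + 1), q.1 < q.2 ∧
      f^[(q.1 : ℕ)] (p ν) = f^[(q.2 : ℕ)] (p ν) := by
    intro ν
    obtain ⟨hfin, hcard⟩ := horb ν
    have hninj : ¬ Function.Injective (fun i : Fin (k + 1) => f^[(i : ℕ)] (p ν)) := by
      intro hinj
      have hsub : Set.range (fun i : Fin (k + 1) => f^[(i : ℕ)] (p ν)) ⊆
          Set.range fun n : ℕ => f^[n] (p ν) := by
        rintro x ⟨i, rfl⟩; exact ⟨i, rfl⟩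
      have h1 : (Set.range (fun i : Fin (k + 1) => f^[(i : ℕ)] (p ν))).ncard = k + 1 := by
        rw [← Nat.card_coe_set_eq, Nat.card_range_of_injective hinj]
        simp
      have h2 := Set.ncard_le_ncard hsub hfin
      omega
    rw [Function.not_injective_iff] at hninj
    obtain ⟨i, j, hij, hne⟩ := hninj
    rcases lt_or_gt_of_ne hne with h | h
    · exact ⟨(i, j), h, hij⟩
    · exact ⟨(j, i), h, hij.symm⟩
  choose c hc1 hc2 using key
  obtain ⟨q, hq⟩ := Finite.exists_infinite_fiber c
  have hqinf : {ν | c ν = q}.Infinite := by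
    rw [← Set.infinite_coe_iff]; exact hq
  obtain ⟨ν₀, hν₀⟩ := hqinf.nonempty
  have hab : ((q.1 : ℕ)) < (q.2 : ℕ) := by
    have := hc1 ν₀; rw [hν₀] at this; exact_mod_cast this
  set a : ℕ := (q.1 : ℕ)
  set b : ℕ := (q.2 : ℕ)
  -- frequently equal on a punctured neighborhood
  have hpt : Filter.Tendsto p Filter.atTop (nhdsWithin (0 : ℂ) {(0:ℂ)}ᶜ) :=
    tendsto_nhdsWithin_of_tendsto_nhds_of_eventually_within p hlim
      (Filter.Eventually.of_forall hpne)
  have hfreq' : ∃ᶠ ν in Filter.atTop, f^[a] (p ν) = f^[b] (p ν) := by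
    have : ∃ᶠ ν in Filter.atTop, c ν = q := Nat.frequently_atTop_iff_infinite.2 hqinf
    exact this.mono fun ν h => by have := hc2 ν; rw [h] at this; exact this
  have hfreq : ∃ᶠ z in nhdsWithin (0 : ℂ) {(0:ℂ)}ᶜ, f^[a] z = f^[b] z :=
    hpt.frequently hfreq'
  have heq : ∀ᶠ z in nhds (0 : ℂ), f^[a] z = f^[b] z :=
    ((hana a).frequently_eq_iff_eventually_eq (hana b)).1 hfreq
  -- local inverse of f^[a]
  have hs : HasStrictDerivAt f^[a] ((deriv f 0) ^ a) 0 := by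
    obtain ⟨ps, hps⟩ := hana a
    have h1 := hps.hasStrictDerivAt
    have h2 : (ps 1 fun _ => 1) = (deriv f 0) ^ a := h1.hasDerivAt.unique (hder a)
    rwa [h2] at h1
  have hc' : (deriv f 0) ^ a ≠ 0 := pow_ne_zero _ hc0
  have hF := hs.hasStrictFDerivAt_equiv hc'
  have hlinv := hF.eventually_left_inverse
  set d : ℕ := b - a with hd
  have hdpos : 0 < d := Nat.sub_pos_of_lt hab
  have hcont : Filter.Tendsto f^[d] (nhds (0 : ℂ)) (nhds (0 : ℂ)) := by
    have := (hana d).continuousAt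
    rwa [ContinuousAt, hfix d] at this
  refine ⟨d, hdpos, ?_⟩
  filter_upwards [heq, hlinv, hcont.eventually hlinv] with z h1 h2 h3
  have hbad : a + d = b := by omega
  have h4 : f^[a] (f^[d] z) = f^[a] z := by
    rw [← Function.iterate_add_apply, hbad, ← h1]
  have := h3
  rw [h4, h2] at this
  simpa using this.symm
end

section
/- Let f be a germ of a holomorphic diffeomorphism of (ℂ,0) of the form f(z) = z + a z^{l+1} + higher order terms with a ≠ 0 (l ≥ 1). Then for every positive integer k and every neighborhood V of 0 there exists a closed disk D ⊆ V centered at 0 such that every point p ∈ D \ {0} has at least k distinct iterates f^0(p), f^1(p), …, i.e., the orbit of p has cardinality at least k. -/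
/-!
Write `f z = z + z ^ n * h z` with `h 0 ≠ 0`. Since `f` is tangent to the identity, every iterate
satisfies `f^[m] z - z ~ m * h 0 * z ^ n` as `z → 0`, so for `m ≥ 1` the iterate `f^[m]` has no
fixed points in a punctured neighbourhood of `0`. As `f` also maps punctured neighbourhoods of `0`
into punctured neighbourhoods of `0`, the first `k` iterates of every point close enough to `0`
are pairwise distinct.
-/

open Filter Topology Function Metric

theorem Filter.Tendsto.eventually_injOn_iterate {α : Type*} {f : α → α} {l : Filter α}
    (hf : Tendsto f l l) (hper : ∀ m ≠ 0, ∀ᶠ z in l, f^[m] z ≠ z) (k : ℕ) :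
    ∀ᶠ z in l, Set.InjOn (fun i => f^[i] z) (Set.Iio k) := by
  have hshift : ∀ᶠ z in l, ∀ i ∈ Finset.range k, ∀ d ∈ Finset.Ioo 0 k,
      f^[d] (f^[i] z) ≠ f^[i] z := by
    simp only [eventually_all_finset]
    exact fun i _ d hd => (hf.iterate i).eventually (hper d (Finset.mem_Ioo.mp hd).1.ne')
  filter_upwards [hshift] with z hz
  have key : ∀ i j, i < j → j < k → f^[i] z ≠ f^[j] z := by
    intro i j hij hj heq
    refine hz i (Finset.mem_range.mpr (hij.trans hj)) (j - i) (by simp; omega) ?_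
    rw [← iterate_add_apply, Nat.sub_add_cancel hij.le, heq]
  intro i hi j hj hij
  rcases lt_trichotomy i j with hlt | heq | hgt
  · exact absurd hij (key i j hlt hj)
  · exact heq
  · exact absurd hij.symm (key j i hgt hi)

theorem AnalyticAt.exists_eventuallyEq_add_pow_mul {𝕜 : Type*} [NontriviallyNormedField 𝕜]
    {f : 𝕜 → 𝕜} (hf : AnalyticAt 𝕜 f 0) (hfid : ¬ f =ᶠ[𝓝 0] id) :
    ∃ (n : ℕ) (h : 𝕜 → 𝕜), AnalyticAt 𝕜 h 0 ∧ h 0 ≠ 0 ∧ ∀ᶠ z in 𝓝 0, f z = z + z ^ n * h z := by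
  have hne : ¬ ∀ᶠ z in 𝓝 (0 : 𝕜), f z - z = 0 := fun hev =>
    hfid (hev.mono fun z hz => sub_eq_zero.mp hz)
  obtain ⟨n, h, hh, hh0, hfh⟩ :=
    (hf.sub analyticAt_id).exists_eventuallyEq_pow_smul_nonzero_iff.mpr hne
  refine ⟨n, h, hh, hh0, hfh.mono fun z hz => ?_⟩
  simp only [Pi.sub_apply, id_eq, sub_zero, smul_eq_mul] at hz
  linear_combination hz

section TangentToIdentity

variable {𝕜 : Type*} [NontriviallyNormedField 𝕜] {f : 𝕜 → 𝕜}

theorem tendsto_iterate_div_self (hf : HasDerivAt f 1 0) (hf0 : f 0 = 0) (m : ℕ) :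
    Tendsto (fun z => f^[m] z / z) (𝓝[≠] 0) (𝓝 1) := by
  have hslope := hasDerivAt_iff_tendsto_slope.mp (hf.iterate 0 hf0 m)
  rw [one_pow] at hslope
  refine hslope.congr' (.of_forall fun z => ?_)
  simp [slope_def_field, iterate_fixed hf0]

theorem tendsto_iterate_sub_div_pow (hf : HasDerivAt f 1 0) (hf0 : f 0 = 0) {n : ℕ}
    {h : 𝕜 → 𝕜} (hh : ContinuousAt h 0) (hfh : ∀ᶠ z in 𝓝 0, f z = z + z ^ n * h z) (m : ℕ) :
    Tendsto (fun z => (f^[m] z - z) / z ^ n) (𝓝[≠] 0) (𝓝 (m * h 0)) := by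
  induction m with
  | zero => simp
  | succ m ih =>
    have hto : Tendsto f^[m] (𝓝[≠] 0) (𝓝 0) := by
      have := (hf.iterate 0 hf0 m).continuousAt.tendsto
      rw [iterate_fixed hf0] at this
      exact this.mono_left nhdsWithin_le_nhds
    have hstep : Tendsto (fun z => (f^[m] z / z) ^ n * h (f^[m] z)) (𝓝[≠] 0) (𝓝 (h 0)) := by
      simpa using ((tendsto_iterate_div_self hf hf0 m).pow n).mul (hh.tendsto.comp hto)
    have hsplit : ∀ᶠ z in 𝓝[≠] 0, (f^[m] z - z) / z ^ n + (f^[m] z / z) ^ n * h (f^[m] z)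
        = (f^[m + 1] z - z) / z ^ n := by
      filter_upwards [hto.eventually hfh, self_mem_nhdsWithin] with z hz hz0
      rw [iterate_succ_apply', hz, div_pow, div_mul_eq_mul_div, ← add_div]
      ring
    rw [Nat.cast_succ, add_one_mul]
    exact (ih.add hstep).congr' hsplit

theorem eventually_iterate_ne_self [CharZero 𝕜] (hf : HasDerivAt f 1 0) (hf0 : f 0 = 0)
    {n : ℕ} {h : 𝕜 → 𝕜} (hh : ContinuousAt h 0) (hh0 : h 0 ≠ 0)
    (hfh : ∀ᶠ z in 𝓝 0, f z = z + z ^ n * h z) {m : ℕ} (hm : m ≠ 0) :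
    ∀ᶠ z in 𝓝[≠] 0, f^[m] z ≠ z := by
  have hlim : (m : 𝕜) * h 0 ≠ 0 := mul_ne_zero (Nat.cast_ne_zero.mpr hm) hh0
  filter_upwards [(tendsto_iterate_sub_div_pow hf hf0 hh hfh m).eventually_ne hlim] with z hz heq
  simp [heq] at hz

end TangentToIdentity

theorem Metric.exists_closedBall_subset_and_forall_ne {α : Type*} [PseudoMetricSpace α] {x : α}
    {V : Set α} {P : α → Prop} (hV : V ∈ 𝓝 x) (hP : ∀ᶠ z in 𝓝[≠] x, P z) :
    ∃ r > 0, closedBall x r ⊆ V ∧ ∀ p ∈ closedBall x r, p ≠ x → P p :=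
  nhds_basis_closedBall.eventually_iff.mp ((eventually_nhdsWithin_iff.mp hP).and hV) |>.imp
    fun _ ⟨hr, hball⟩ => ⟨hr, fun _ hp => (hball hp).2, fun _ hp => (hball hp).1⟩

/-- Near a parabolic fixed point (a germ tangent to the identity but not the
identity), orbits of points arbitrarily close to `0` have arbitrarily large
cardinality: for every `k` and every neighborhood `V` of `0` there is a closed
disk `D ⊆ V` centered at `0` such that every `p ∈ D \ {0}` has at least `k`
distinct iterates. -/
theorem parabolic_germ_orbits_large
    (f : ℂ → ℂ) (hf : AnalyticAt ℂ f 0) (hf0 : f 0 = 0)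
    (hf' : deriv f 0 = 1) (hfid : ¬ (f =ᶠ[nhds (0 : ℂ)] id)) :
    ∀ k : ℕ, 0 < k → ∀ V ∈ nhds (0 : ℂ), ∃ r : ℝ, 0 < r ∧
      Metric.closedBall (0 : ℂ) r ⊆ V ∧
      ∀ p ∈ Metric.closedBall (0 : ℂ) r, p ≠ 0 →
        ∃ s : Finset ℂ, s.card = k ∧ ↑s ⊆ Set.range fun n : ℕ => f^[n] p := by
  intro k _ V hV
  have hderiv : HasDerivAt f 1 0 := hf' ▸ hf.differentiableAt.hasDerivAt
  obtain ⟨n, h, hh, hh0, hfh⟩ := hf.exists_eventuallyEq_add_pow_mul hfid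
  have hpunct : Tendsto f (𝓝[≠] 0) (𝓝[≠] 0) := by
    simpa [hf0] using hderiv.tendsto_nhdsNE one_ne_zero
  have hinj := hpunct.eventually_injOn_iterate
    (fun _ hm => eventually_iterate_ne_self hderiv hf0 hh.continuousAt hh0 hfh hm) k
  obtain ⟨r, hr, hrV, hrinj⟩ := exists_closedBall_subset_and_forall_ne hV hinj
  refine ⟨r, hr, hrV, fun p hp hp0 => ⟨(Finset.range k).image (f^[·] p), ?_, ?_⟩⟩
  · rw [Finset.card_image_of_injOn (by simpa using hrinj p hp hp0), Finset.card_range]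
  · simp
end

section
/- Let ω be a real analytic 1-form on a neighborhood of 0 ∈ ℝⁿ and ω_ℂ its complexification on a neighborhood of 0 ∈ ℂⁿ. If there is a holomorphic function F on a neighborhood of 0 ∈ ℂⁿ, nonconstant, with dF ∧ ω_ℂ = 0 (F is a holomorphic first integral of ω_ℂ), then there exists a nonconstant real analytic function h on a neighborhood of 0 ∈ ℝⁿ with dh ∧ ω = 0, i.e., the real foliation defined by ω admits a real analytic first integral. -/
/-!
For every `ℝ`-linear `φ : ℂ → ℝ`, the function `x ↦ φ (F x)` on `ℝⁿ` is a real analytic first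
integral of `ω`: on real points `ω_ℂ` takes real values on real vectors, so evaluating
`dF ∧ ω_ℂ = 0` at real vectors and applying `φ` gives `dh ∧ ω = 0`. Taking `φ = re` or `φ = im`,
one of the two is nonconstant: otherwise `F` would be constant on `ℝⁿ` near `0`, hence constant
near `0` by the identity theorem, since `ℝⁿ` is a totally real slice of `ℂⁿ`.
-/

open Filter Topology Metric

noncomputable def Complex.ofRealPiCLM (ι : Type*) : (ι → ℝ) →L[ℝ] (ι → ℂ) :=
  ContinuousLinearMap.pi fun j => Complex.ofRealCLM.comp (ContinuousLinearMap.proj j)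

namespace Complex

variable {ι : Type*}

@[simp]
lemma ofRealPiCLM_apply (x : ι → ℝ) (j : ι) : ofRealPiCLM ι x j = x j := rfl

lemma ofRealPiCLM_re_add_I_smul_ofRealPiCLM_im (z : ι → ℂ) :
    ofRealPiCLM ι (fun j => (z j).re) + I • ofRealPiCLM ι (fun j => (z j).im) = z := by
  ext j
  simp [mul_comm I, re_add_im]

lemma ofRealPiCLM_add_ofReal_smul (x y : ι → ℝ) (s : ℝ) :
    ofRealPiCLM ι x + (s : ℂ) • ofRealPiCLM ι y = ofRealPiCLM ι (x + s • y) := by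
  rw [map_add, map_smul, ← coe_smul]

end Complex

open Complex

variable {ι : Type*} [Fintype ι]

/- The slice `t ↦ F (re z + t • im z)` is holomorphic near the closed disc of radius `2`, equals `c`
on `[-1, 1]` and takes the value `F z` at `t = I`; the one-variable identity theorem concludes. -/
theorem AnalyticAt.eventually_eq_of_eventually_eq_comp_ofRealPiCLM {F : (ι → ℂ) → ℂ}
    (hF : AnalyticAt ℂ F 0) {c : ℂ} (h : ∀ᶠ x in 𝓝 (0 : ι → ℝ), F (ofRealPiCLM ι x) = c) :
    ∀ᶠ z in 𝓝 (0 : ι → ℂ), F z = c := by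
  set re' : (ι → ℂ) → ι → ℝ := fun z j => (z j).re
  set im' : (ι → ℂ) → ι → ℝ := fun z j => (z j).im
  have hslice_analytic : ∀ᶠ z in 𝓝 (0 : ι → ℂ), ∀ t ∈ closedBall (0 : ℂ) 2,
      AnalyticAt ℂ F (ofRealPiCLM ι (re' z) + t • ofRealPiCLM ι (im' z)) := by
    refine (isCompact_closedBall _ _).eventually_forall_of_forall_eventually fun t _ => ?_
    have hcont : Continuous fun p : (ι → ℂ) × ℂ =>
        ofRealPiCLM ι (re' p.1) + p.2 • ofRealPiCLM ι (im' p.1) := by fun_prop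
    exact (hcont.tendsto' (0, t) 0 (by ext; simp [re', im'])).eventually hF.eventually_analyticAt
  have hslice_real : ∀ᶠ z in 𝓝 (0 : ι → ℂ), ∀ s ∈ Set.Icc (-1 : ℝ) 1,
      F (ofRealPiCLM ι (re' z + s • im' z)) = c := by
    refine isCompact_Icc.eventually_forall_of_forall_eventually fun s _ => ?_
    have hcont : Continuous fun p : (ι → ℂ) × ℝ => re' p.1 + p.2 • im' p.1 := by fun_prop
    exact (hcont.tendsto' (0, s) 0 (by ext; simp [re', im'])).eventually h
  filter_upwards [hslice_analytic, hslice_real] with z hzF hzc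
  set g : ℂ → ℂ := fun t => F (ofRealPiCLM ι (re' z) + t • ofRealPiCLM ι (im' z))
  have hg : AnalyticOnNhd ℂ g (ball 0 2) := fun t ht =>
    (hzF t (ball_subset_closedBall ht)).fun_comp (f := fun t : ℂ => _ + t • _) (by fun_prop)
  have hg_real : ∃ᶠ t in 𝓝[≠] (0 : ℂ), g t = c := by
    have hofReal : Tendsto ofReal (𝓝[≠] 0) (𝓝[≠] 0) := by
      simpa using continuous_ofReal.continuousWithinAt.tendsto_nhdsWithin
        (fun s hs => ofReal_ne_zero.2 hs) (x := (0 : ℝ)) (s := {0}ᶜ)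
    refine hofReal.frequently (Eventually.frequently ?_)
    filter_upwards [nhdsWithin_le_nhds (Icc_mem_nhds (by norm_num : (-1 : ℝ) < 0) one_pos)]
      with s hs
    simp only [g, ofRealPiCLM_add_ofReal_smul, hzc s hs]
  have := hg.eqOn_of_preconnected_of_frequently_eq analyticOnNhd_const
    (convex_ball _ _).isPreconnected (mem_ball_self two_pos) hg_real
    (show I ∈ ball (0 : ℂ) 2 by simp)
  simpa only [g, re', im', ofRealPiCLM_re_add_I_smul_ofRealPiCLM_im] using this

def IsLocalFirstIntegral {𝕜 ι : Type*} [NontriviallyNormedField 𝕜] [Fintype ι]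
    (h : (ι → 𝕜) → 𝕜) (a : (ι → 𝕜) → ι → 𝕜) (x₀ : ι → 𝕜) : Prop :=
  ∀ᶠ x in 𝓝 x₀, ∀ v w : ι → 𝕜,
    fderiv 𝕜 h x v * (∑ j, a x j * w j) = fderiv 𝕜 h x w * (∑ j, a x j * v j)

lemma AnalyticAt.clm_comp_comp_ofRealPiCLM (φ : ℂ →L[ℝ] ℝ) {F : (ι → ℂ) → ℂ} {x₀ : ι → ℝ}
    (hF : AnalyticAt ℂ F (ofRealPiCLM ι x₀)) :
    AnalyticAt ℝ (fun x => φ (F (ofRealPiCLM ι x))) x₀ :=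
  (φ.analyticAt _).comp (hF.restrictScalars.comp ((ofRealPiCLM ι).analyticAt x₀))

lemma fderiv_clm_comp_comp_ofRealPiCLM_apply (φ : ℂ →L[ℝ] ℝ) {F : (ι → ℂ) → ℂ} {x : ι → ℝ}
    (hF : DifferentiableAt ℂ F (ofRealPiCLM ι x)) (v : ι → ℝ) :
    fderiv ℝ (fun x => φ (F (ofRealPiCLM ι x))) x v =
      φ (fderiv ℂ F (ofRealPiCLM ι x) (ofRealPiCLM ι v)) := by
  have hG : HasFDerivAt (fun x => φ (F (ofRealPiCLM ι x)))
      (φ.comp (((fderiv ℂ F _).restrictScalars ℝ).comp (ofRealPiCLM ι))) x :=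
    φ.hasFDerivAt.comp x ((hF.hasFDerivAt.restrictScalars ℝ).comp x (ofRealPiCLM ι).hasFDerivAt)
  rw [hG.fderiv]
  rfl

lemma sum_ofRealPiCLM_mul_ofRealPiCLM (y u : ι → ℝ) :
    ∑ j, ofRealPiCLM ι y j * ofRealPiCLM ι u j = ((∑ j, y j * u j : ℝ) : ℂ) := by
  push_cast
  rfl

lemma IsLocalFirstIntegral.clm_comp_comp_ofRealPiCLM {F : (ι → ℂ) → ℂ}
    {aC : (ι → ℂ) → ι → ℂ} {a : (ι → ℝ) → ι → ℝ} {x₀ : ι → ℝ}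
    (hF : IsLocalFirstIntegral F aC (ofRealPiCLM ι x₀))
    (hF_diff : ∀ᶠ z in 𝓝 (ofRealPiCLM ι x₀), DifferentiableAt ℂ F z)
    (haC : ∀ᶠ x in 𝓝 x₀, aC (ofRealPiCLM ι x) = ofRealPiCLM ι (a x)) (φ : ℂ →L[ℝ] ℝ) :
    IsLocalFirstIntegral (fun x => φ (F (ofRealPiCLM ι x))) a x₀ := by
  have hE := (ofRealPiCLM ι).continuous.tendsto x₀
  filter_upwards [hE.eventually hF, hE.eventually hF_diff, haC] with x hFx hdiff hax v w
  have hφ : ∀ (A : ℂ) (s : ℝ), φ A * s = φ (A * s) := fun A s => by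
    rw [mul_comm A, ← real_smul, map_smul, smul_eq_mul, mul_comm]
  have hFx' := hFx (ofRealPiCLM ι v) (ofRealPiCLM ι w)
  simp only [hax, sum_ofRealPiCLM_mul_ofRealPiCLM] at hFx'
  rw [fderiv_clm_comp_comp_ofRealPiCLM_apply φ hdiff,
    fderiv_clm_comp_comp_ofRealPiCLM_apply φ hdiff, hφ, hφ, hFx']

theorem real_first_integral_of_complexified_first_integral_general
    (n : ℕ)
    (a : (Fin n → ℝ) → (Fin n → ℝ)) (aC : (Fin n → ℂ) → (Fin n → ℂ))
    -- `aC` is the complexification of `a`: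
    (hcompat : ∀ᶠ x in nhds (0 : Fin n → ℝ),
      aC (fun j => (x j : ℂ)) = fun j => ((a x j : ℝ) : ℂ))
    (F : (Fin n → ℂ) → ℂ) (hF : AnalyticAt ℂ F 0)
    (hFnc : ¬ (F =ᶠ[nhds (0 : Fin n → ℂ)] fun _ => F 0))
    -- `dF ∧ ω_ℂ = 0` near `0 ∈ ℂⁿ`:
    (hFint : ∀ᶠ z in nhds (0 : Fin n → ℂ), ∀ v w : Fin n → ℂ,
      (fderiv ℂ F z v) * (∑ j, aC z j * w j) =
      (fderiv ℂ F z w) * (∑ j, aC z j * v j)) :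
    ∃ h : (Fin n → ℝ) → ℝ, AnalyticAt ℝ h 0 ∧
      ¬ (h =ᶠ[nhds (0 : Fin n → ℝ)] fun _ => h 0) ∧
      ∀ᶠ x in nhds (0 : Fin n → ℝ), ∀ v w : Fin n → ℝ,
        (fderiv ℝ h x v) * (∑ j, a x j * w j) =
        (fderiv ℝ h x w) * (∑ j, a x j * v j) := by
  set E := ofRealPiCLM (Fin n)
  have hE0 : E 0 = 0 := map_zero E
  rw [← hE0] at hF hFint
  have hFE (φ : ℂ →L[ℝ] ℝ) : AnalyticAt ℝ (fun x => φ (F (E x))) 0 ∧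
      IsLocalFirstIntegral (fun x => φ (F (E x))) a 0 :=
    ⟨hF.clm_comp_comp_ofRealPiCLM φ, IsLocalFirstIntegral.clm_comp_comp_ofRealPiCLM hFint
      (hF.eventually_analyticAt.mono fun _ hz => hz.differentiableAt) hcompat φ⟩
  have hFE_nonconst : ¬ ∀ᶠ x in 𝓝 0, F (E x) = F 0 := fun h => hFnc <| by
    simpa only [hE0, EventuallyEq] using hF.eventually_eq_of_eventually_eq_comp_ofRealPiCLM h
  by_cases hre : (fun x => (F (E x)).re) =ᶠ[𝓝 0] fun _ => (F (E 0)).re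
  · refine ⟨fun x => (F (E x)).im, (hFE imCLM).1, fun him => hFE_nonconst ?_, (hFE imCLM).2⟩
    filter_upwards [hre, him] with x hxre hxim
    rw [← hE0]
    exact Complex.ext hxre hxim
  · exact ⟨fun x => (F (E x)).re, (hFE reCLM).1, hre, (hFE reCLM).2⟩

/-- Lemma 3.1: let `ω = Σ aⱼ dxⱼ` be a real analytic 1-form near `0 ∈ ℝⁿ`,
with complexification `ω_ℂ = Σ (aℂ)ⱼ dzⱼ` near `0 ∈ ℂⁿ` (the `(aℂ)ⱼ` are the
holomorphic extensions of the `aⱼ`). If `ω_ℂ` admits a nonconstant holomorphic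
first integral `F` (i.e. `dF ∧ ω_ℂ = 0` near `0`), then `ω` admits a
nonconstant real analytic first integral `h` near `0 ∈ ℝⁿ`
(i.e. `dh ∧ ω = 0` near `0`). -/
theorem real_first_integral_of_complexified_first_integral
    (n : ℕ)
    (a : (Fin n → ℝ) → (Fin n → ℝ)) (aC : (Fin n → ℂ) → (Fin n → ℂ))
    (ha : AnalyticAt ℝ a 0) (haC : AnalyticAt ℂ aC 0)
    -- `aC` is the complexification of `a`:
    (hcompat : ∀ᶠ x in nhds (0 : Fin n → ℝ),
      aC (fun j => (x j : ℂ)) = fun j => ((a x j : ℝ) : ℂ))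
    (F : (Fin n → ℂ) → ℂ) (hF : AnalyticAt ℂ F 0)
    (hFnc : ¬ (F =ᶠ[nhds (0 : Fin n → ℂ)] fun _ => F 0))
    -- `dF ∧ ω_ℂ = 0` near `0 ∈ ℂⁿ`:
    (hFint : ∀ᶠ z in nhds (0 : Fin n → ℂ), ∀ v w : Fin n → ℂ,
      (fderiv ℂ F z v) * (∑ j, aC z j * w j) =
      (fderiv ℂ F z w) * (∑ j, aC z j * v j)) :
    ∃ h : (Fin n → ℝ) → ℝ, AnalyticAt ℝ h 0 ∧
      ¬ (h =ᶠ[nhds (0 : Fin n → ℝ)] fun _ => h 0) ∧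
      ∀ᶠ x in nhds (0 : Fin n → ℝ), ∀ v w : Fin n → ℝ,
        (fderiv ℝ h x v) * (∑ j, a x j * w j) =
        (fderiv ℝ h x w) * (∑ j, a x j * v j) :=
  real_first_integral_of_complexified_first_integral_general n a aC hcompat F hF hFnc hFint
end

section
/- Let ω = x dy + y dx + ω̃ be a germ of an integrable holomorphic 1-form at 0 ∈ ℂ², where ω̃ has vanishing 1-jet at 0, and suppose ω admits a holomorphic first integral of the form f·g with f, g ∈ O₂ irreducible, vanishing at 0, and in general position. Then the real analytic surface V = {Re f = Re g} ∩ {Im f = −Im g} passes through 0, is totally real off the origin, has contact order one with the foliation defined by ω off the origin, and the restriction of the foliation to V is a real analytic foliation all of whose leaves near 0 are compact curves (level sets of |f|²), i.e., the restriction has a center type singularity at 0. -/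
/-!
On `V` one has `g = conj f`, so the tangent space of `V` at `p` is `{v | dg v = conj (df v)}`;
as `df, dg` stay independent near `0`, it contains no complex line. The leaf of `ω` through
`p ≠ 0` is the complex line spanned by `(Q, -P)`, on which `d(fg) = conj f • df + f • dg`
vanishes; this produces a nonzero vector of that line tangent to `V`, and total reality allows
no more. The leaves of the restriction lie in level sets of `|f|`, closed in a compact
neighbourhood of `0`.
-/

open Complex ComplexConjugate Filter Topology Module

theorem HasFDerivAt.eventually_imp_eq_of_injective {𝕜 E F : Type*} [NontriviallyNormedField 𝕜]
    [CompleteSpace 𝕜] [NormedAddCommGroup E] [NormedSpace 𝕜 E] [FiniteDimensional 𝕜 E]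
    [NormedAddCommGroup F] [NormedSpace 𝕜 F] {Φ : E → F} {Φ' : E →L[𝕜] F} {x : E}
    (hΦ : HasFDerivAt Φ Φ' x) (hinj : Function.Injective Φ') (c : F) :
    ∀ᶠ z in 𝓝 x, Φ z = c → z = x := by
  obtain ⟨C, -, hC⟩ := (Φ' : E →ₗ[𝕜] F).injective_iff_antilipschitz.mp hinj
  have := hΦ.eventually_ne (c := c) ⟨C, hC⟩
  filter_upwards [eventually_nhdsWithin_iff.mp this] with z hz
  exact fun hzc => by_contra fun hzx => hz hzx hzc

section JointKernel

variable {𝕜 E : Type*} [RCLike 𝕜] [NormedAddCommGroup E] [NormedSpace 𝕜 E] [FiniteDimensional 𝕜 E]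

theorem finrank_strongDual_eq : finrank 𝕜 (E →L[𝕜] 𝕜) = finrank 𝕜 E :=
  LinearMap.toContinuousLinearMap.finrank_eq.symm.trans Subspace.dual_finrank_eq

theorem eq_zero_of_linearIndependent_of_forall_apply_eq_zero {ι : Type*} [Fintype ι]
    {φ : ι → E →L[𝕜] 𝕜} (hφ : LinearIndependent 𝕜 φ) (hcard : Fintype.card ι = finrank 𝕜 E)
    {u : E} (hu : ∀ i, φ i u = 0) : u = 0 := by
  by_contra hu0
  obtain ⟨ψ, hψ⟩ := SeparatingDual.exists_ne_zero (R := 𝕜) hu0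
  have hspan := hφ.span_eq_top_of_card_eq_finrank' (hcard.trans finrank_strongDual_eq.symm)
  have hle : Submodule.span 𝕜 (Set.range φ) ≤
      LinearMap.ker (ContinuousLinearMap.apply 𝕜 𝕜 u : (E →L[𝕜] 𝕜) →ₗ[𝕜] 𝕜) :=
    Submodule.span_le.mpr (Set.range_subset_iff.mpr hu)
  exact hψ (hle (hspan ▸ Submodule.mem_top))

theorem eq_zero_of_linearIndependent_pair (hE : finrank 𝕜 E = 2) {α β : E →L[𝕜] 𝕜}
    (h : LinearIndependent 𝕜 ![α, β]) {u : E} (hα : α u = 0) (hβ : β u = 0) : u = 0 :=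
  eq_zero_of_linearIndependent_of_forall_apply_eq_zero h (by simp [hE])
    (Fin.forall_fin_two.mpr ⟨hα, hβ⟩)

theorem eventually_imp_eq_of_linearIndependent_fderiv (hE : finrank 𝕜 E = 2) {f g : E → 𝕜}
    {x : E} (hf : DifferentiableAt 𝕜 f x) (hg : DifferentiableAt 𝕜 g x)
    (hfg : LinearIndependent 𝕜 ![fderiv 𝕜 f x, fderiv 𝕜 g x]) :
    ∀ᶠ p in 𝓝 x, f p = f x → g p = g x → p = x := by
  have hinj : Function.Injective ((fderiv 𝕜 f x).prod (fderiv 𝕜 g x)) :=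
    (injective_iff_map_eq_zero _).mpr fun u hu =>
      eq_zero_of_linearIndependent_pair hE hfg (congrArg Prod.fst hu) (congrArg Prod.snd hu)
  filter_upwards [(hf.hasFDerivAt.prodMk hg.hasFDerivAt).eventually_imp_eq_of_injective hinj
    (f x, g x)] with p hp hfp hgp
  exact hp (Prod.ext hfp hgp)

end JointKernel

theorem ContinuousAt.eventually_linearIndependent_pair {𝕜 X V : Type*}
    [NontriviallyNormedField 𝕜] [CompleteSpace 𝕜] [TopologicalSpace X] [NormedAddCommGroup V]
    [NormedSpace 𝕜 V] [FiniteDimensional 𝕜 V] {φ ψ : X → V} {x : X} (hφ : ContinuousAt φ x)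
    (hψ : ContinuousAt ψ x) (h : LinearIndependent 𝕜 ![φ x, ψ x]) :
    ∀ᶠ y in 𝓝 x, LinearIndependent 𝕜 ![φ y, ψ y] :=
  (hφ.matrixVecCons (hψ.matrixVecCons continuousAt_const)).eventually h.eventually

theorem eventually_imp_eq_zero_of_isLittleO_sub {E : Type*} [NormedAddCommGroup E] {Φ : E → E}
    (h : (fun p => Φ p - p) =o[𝓝 0] fun p => ‖p‖) : ∀ᶠ p in 𝓝 0, Φ p = 0 → p = 0 := by
  filter_upwards [h.def one_half_pos] with p hp hΦ
  rw [hΦ, zero_sub, norm_neg, norm_norm] at hp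
  exact norm_eq_zero.mp (by linarith [norm_nonneg p])

/-- The choice `z = I * conj a * c` works because `conj c * a + c * b = 0` forces `b` to be a
multiple of `conj c * a`. -/
theorem exists_ne_zero_mul_eq_conj_mul {a b c : ℂ} (ha : a ≠ 0) (hc : c ≠ 0)
    (h : conj c * a + c * b = 0) : ∃ z ≠ 0, z * b = conj (z * a) := by
  refine ⟨I * conj a * c, by simp [I_ne_zero, ha, hc], ?_⟩
  simp only [map_mul, conj_I, conj_conj]
  linear_combination (I * conj a) * h

section ConjEqLocus

variable {E : Type*} [AddCommGroup E] [Module ℂ E] [Module ℝ E] [IsScalarTower ℝ ℂ E]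

/-- For `α = df`, `β = dg` this is the tangent space of `{g = conj f}`. -/
def conjEqLocus (α β : E →ₗ[ℂ] ℂ) : Submodule ℝ E where
  carrier := {v | β v = conj (α v)}
  add_mem' {v w} hv hw := by simp_all
  zero_mem' := by simp
  smul_mem' r v hv := by
    simp only [Set.mem_ofPred_eq] at hv ⊢
    rw [← algebraMap_smul ℂ r v, map_smul, map_smul, hv, smul_eq_mul, smul_eq_mul, map_mul,
      Complex.coe_algebraMap, conj_ofReal]

@[simp]
theorem mem_conjEqLocus {α β : E →ₗ[ℂ] ℂ} {v : E} : v ∈ conjEqLocus α β ↔ β v = conj (α v) :=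
  Iff.rfl

theorem conjEqLocus_isTotallyReal {α β : E →ₗ[ℂ] ℂ} (hαβ : ∀ u, α u = 0 → β u = 0 → u = 0)
    {v : E} (hv : v ∈ conjEqLocus α β) (hIv : I • v ∈ conjEqLocus α β) : v = 0 := by
  rw [mem_conjEqLocus] at hv hIv
  rw [map_smul, map_smul, smul_eq_mul, smul_eq_mul, hv, map_mul, conj_I] at hIv
  have hα : α v = 0 := by
    have h : (2 * I) * conj (α v) = 0 := by linear_combination hIv
    simpa [I_ne_zero] using h
  exact hαβ v hα (by rw [hv, hα, map_zero])

theorem finrank_eq_one_of_isTotallyReal_of_le_span_singleton {S : Submodule ℝ E} {w : E}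
    (hwS : w ∈ S) (hw : w ≠ 0) (hS : ∀ v ∈ S, I • v ∈ S → v = 0)
    (hSw : S ≤ (ℂ ∙ w).restrictScalars ℝ) :
    finrank ℝ S = 1 := by
  suffices S = ℝ ∙ w by rw [this]; exact finrank_span_singleton hw
  refine le_antisymm (fun u hu => ?_) ((Submodule.span_singleton_le_iff_mem _ _).mpr hwS)
  obtain ⟨ζ, rfl⟩ := Submodule.mem_span_singleton.mp (hSw hu)
  have hζ : ζ • w = ζ.re • w + ζ.im • I • w := by
    rw [← algebraMap_smul ℂ ζ.re, ← algebraMap_smul ℂ ζ.im, smul_smul, ← add_smul,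
      Complex.coe_algebraMap, re_add_im]
  by_cases him : ζ.im = 0
  · rw [hζ, him, zero_smul, add_zero]
    exact Submodule.smul_mem _ _ (Submodule.mem_span_singleton_self w)
  · have hIw : I • w ∈ S := by
      have : I • w = ζ.im⁻¹ • (ζ • w - ζ.re • w) := by
        rw [hζ, add_sub_cancel_left, inv_smul_smul₀ him]
      rw [this]
      exact S.smul_mem _ (S.sub_mem hu (S.smul_mem _ hwS))
    exact absurd (hS w hwS hIw) hw

theorem finrank_conjEqLocus_inf_span_singleton {α β : E →ₗ[ℂ] ℂ}
    (hαβ : ∀ u, α u = 0 → β u = 0 → u = 0) {c : ℂ} (hc : c ≠ 0) {v₀ : E} (hv₀ : v₀ ≠ 0)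
    (h : conj c * α v₀ + c * β v₀ = 0) :
    finrank ℝ ↥(conjEqLocus α β ⊓ (ℂ ∙ v₀).restrictScalars ℝ) = 1 := by
  have hα : α v₀ ≠ 0 := fun hα =>
    hv₀ (hαβ v₀ hα (by simpa [hα, hc] using h))
  obtain ⟨z, hz, hzv₀⟩ := exists_ne_zero_mul_eq_conj_mul hα hc h
  have hspan : ℂ ∙ z • v₀ = ℂ ∙ v₀ := Submodule.span_singleton_smul_eq hz.isUnit v₀
  refine finrank_eq_one_of_isTotallyReal_of_le_span_singleton (w := z • v₀) ⟨?_, ?_⟩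
    (smul_ne_zero hz hv₀) (fun v hv hIv => conjEqLocus_isTotallyReal hαβ hv.1 hIv.1)
    (hspan ▸ inf_le_right)
  · change z • v₀ ∈ conjEqLocus α β
    rwa [mem_conjEqLocus, map_smul, map_smul, smul_eq_mul, smul_eq_mul]
  · exact Submodule.smul_mem _ z (Submodule.mem_span_singleton_self v₀)

end ConjEqLocus

theorem ker_smul_fst_add_smul_snd {𝕜 : Type*} [Field 𝕜] {a b : 𝕜} (hab : (b, -a) ≠ 0) :
    LinearMap.ker (a • LinearMap.fst 𝕜 𝕜 𝕜 + b • LinearMap.snd 𝕜 𝕜 𝕜) = 𝕜 ∙ (b, -a) := by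
  refine le_antisymm (fun u hu => ?_) ((Submodule.span_singleton_le_iff_mem _ _).mpr ?_)
  · replace hu : a * u.1 + b * u.2 = 0 := by simpa using hu
    rw [Submodule.mem_span_singleton]
    by_cases ha : a = 0
    · subst ha
      have hb : b ≠ 0 := by simpa using hab
      have hu₂ : u.2 = 0 := by simpa [hb] using hu
      exact ⟨u.1 / b, Prod.ext (div_mul_cancel₀ _ hb) (by simp [hu₂])⟩
    · refine ⟨-u.2 / a, Prod.ext ?_ ?_⟩
      · simp only [Prod.smul_fst, smul_eq_mul]
        field_simp
        linear_combination -hu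
      · simp only [Prod.smul_snd, smul_eq_mul]
        field_simp
  · simp only [LinearMap.mem_ker, LinearMap.add_apply, LinearMap.smul_apply, LinearMap.fst_apply,
      LinearMap.snd_apply, smul_eq_mul]
    ring

section Tangent

variable {E : Type*} [NormedAddCommGroup E] [NormedSpace ℂ E] [NormedSpace ℝ E]
  [IsScalarTower ℝ ℂ E] {f g : E → ℂ} {p : E}

theorem ker_fderiv_re_sub_im_add (hf : DifferentiableAt ℂ f p) (hg : DifferentiableAt ℂ g p) :
    LinearMap.ker (fderiv ℝ (fun q => ((f q - g q).re, (f q + g q).im)) p : E →ₗ[ℝ] ℝ × ℝ) =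
      conjEqLocus (fderiv ℂ f p : E →ₗ[ℂ] ℂ) (fderiv ℂ g p) := by
  have hF : HasFDerivAt (fun q => ((f q - g q).re, (f q + g q).im))
      ((reCLM.comp ((fderiv ℂ f p - fderiv ℂ g p).restrictScalars ℝ)).prod
        (imCLM.comp ((fderiv ℂ f p + fderiv ℂ g p).restrictScalars ℝ))) p :=
    (reCLM.hasFDerivAt.comp p ((hf.hasFDerivAt.sub hg.hasFDerivAt).restrictScalars ℝ)).prodMk
      (imCLM.hasFDerivAt.comp p ((hf.hasFDerivAt.add hg.hasFDerivAt).restrictScalars ℝ))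
  ext v
  rw [hF.fderiv, LinearMap.mem_ker, mem_conjEqLocus, Complex.ext_iff, conj_re, conj_im]
  change ((fderiv ℂ f p v - fderiv ℂ g p v).re, (fderiv ℂ f p v + fderiv ℂ g p v).im) = 0 ↔ _
  rw [Prod.mk_eq_zero, sub_re, add_im]
  exact and_congr (sub_eq_zero.trans eq_comm) add_eq_zero_iff_eq_neg'

end Tangent

theorem conj_mul_fderiv_add_mul_fderiv_eq_zero {P Q : ℂ} {f g : ℂ × ℂ → ℂ} {p : ℂ × ℂ}
    (hf : DifferentiableAt ℂ f p) (hg : DifferentiableAt ℂ g p) (hgf : g p = conj (f p))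
    (hint : fderiv ℂ (fun q => f q * g q) p (1, 0) * Q =
      fderiv ℂ (fun q => f q * g q) p (0, 1) * P) :
    conj (f p) * fderiv ℂ f p (Q, -P) + f p * fderiv ℂ g p (Q, -P) = 0 := by
  have hv : ((Q, -P) : ℂ × ℂ) = Q • (1, 0) - P • (0, 1) := by ext <;> simp
  rw [fderiv_fun_mul hf hg, hgf] at hint
  simp only [hv, map_sub, map_smul, smul_eq_mul, FunLike.coe_add,
    Pi.add_apply, FunLike.coe_smul, Pi.smul_apply] at hint ⊢
  linear_combination hint

theorem isCompact_sep_norm_eq {X : Type*} [TopologicalSpace X] [T2Space X] {f g : X → ℂ}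
    {U : Set X} (hU : IsCompact U) (hf : ContinuousOn f U) (hg : ContinuousOn g U) (r : ℝ) :
    IsCompact {q ∈ ({q | (f q).re = (g q).re} ∩ {q | (f q).im = -(g q).im}) ∩ U | ‖f q‖ = r} := by
  have hset : {q ∈ ({q | (f q).re = (g q).re} ∩ {q | (f q).im = -(g q).im}) ∩ U | ‖f q‖ = r} =
      U ∩ (fun q => (f q, g q)) ⁻¹' {z | z.1.re = z.2.re ∧ z.1.im = -z.2.im ∧ ‖z.1‖ = r} := by
    ext q
    simp only [Set.mem_inter_iff, Set.mem_ofPred_eq, Set.mem_preimage]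
    tauto
  rw [hset]
  refine hU.of_isClosed_subset ((hf.prodMk hg).preimage_isClosed_of_isClosed hU.isClosed ?_)
    Set.inter_subset_left
  exact (isClosed_eq (by fun_prop) (by fun_prop)).inter
    ((isClosed_eq (by fun_prop) (by fun_prop)).inter (isClosed_eq (by fun_prop) (by fun_prop)))

theorem totally_real_center_from_product_first_integral_general
    (P Q : ℂ × ℂ → ℂ)
    (hPlin : (fun p : ℂ × ℂ => P p - p.2) =o[nhds (0 : ℂ × ℂ)] fun p => ‖p‖)
    (hQlin : (fun p : ℂ × ℂ => Q p - p.1) =o[nhds (0 : ℂ × ℂ)] fun p => ‖p‖)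
    (f g : ℂ × ℂ → ℂ) (hf : AnalyticAt ℂ f 0) (hg : AnalyticAt ℂ g 0)
    (hf0 : f 0 = 0) (hg0 : g 0 = 0)
    (hgen : LinearIndependent ℂ ![fderiv ℂ f 0, fderiv ℂ g 0])
    -- `f·g` is a first integral of `ω = P dx + Q dy` : `d(fg) ∧ ω = 0`
    (hint : ∀ᶠ p in nhds (0 : ℂ × ℂ),
      fderiv ℂ (fun q => f q * g q) p (1, 0) * Q p =
      fderiv ℂ (fun q => f q * g q) p (0, 1) * P p)
    (V : Set (ℂ × ℂ))
    (hV : V = {p | (f p).re = (g p).re} ∩ {p | (f p).im = -(g p).im})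
    (F : ℂ × ℂ → ℝ × ℝ)
    (hF : F = fun p => ((f p - g p).re, (f p + g p).im))
    -- tangent space of `V` at `p` and tangent space of the foliation at `p`
    (T : ℂ × ℂ → Submodule ℝ (ℂ × ℂ))
    (hT : T = fun p => LinearMap.ker
      ((fderiv ℝ F p : ℂ × ℂ →L[ℝ] ℝ × ℝ) : ℂ × ℂ →ₗ[ℝ] ℝ × ℝ))
    (K : ℂ × ℂ → Submodule ℝ (ℂ × ℂ))
    (hK : K = fun p => LinearMap.ker (LinearMap.restrictScalars ℝ
      (P p • LinearMap.fst ℂ ℂ ℂ + Q p • LinearMap.snd ℂ ℂ ℂ))) :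
    (0 : ℂ × ℂ) ∈ V ∧
    ∃ U ∈ nhds (0 : ℂ × ℂ), ∀ p ∈ (V ∩ U) \ {0},
      -- `V` is totally real at `p`
      (∀ v ∈ T p, I • v ∈ T p → v = 0) ∧
      -- contact order one with the foliation
      Module.finrank ℝ ↥(T p ⊓ K p) = 1 ∧
      -- the leaf of the restricted foliation through `p` is compact
      IsCompact {q ∈ V ∩ U | ‖f q‖ = ‖f p‖} := by
  obtain ⟨U, ⟨hU, hUc⟩, hnear⟩ := (compact_basis_nhds (0 : ℂ × ℂ)).eventually_iff.mp <|
    (hf.eventually_analyticAt.and hg.eventually_analyticAt).and <|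
    (hf.fderiv.continuousAt.eventually_linearIndependent_pair hg.fderiv.continuousAt hgen).and <|
    hint.and <|
    (eventually_imp_eq_zero_of_isLittleO_sub (Φ := fun p => (Q p, P p))
      (hQlin.prod_left hPlin)).and <|
    eventually_imp_eq_of_linearIndependent_fderiv (by simp) hf.differentiableAt
      hg.differentiableAt hgen
  refine ⟨by simp [hV, hf0, hg0], U, hU, fun p ⟨⟨hpV, hpU⟩, hp0⟩ => ?_⟩
  obtain ⟨⟨hfp, hgp⟩, hindp, hintp, hPQp, hfgp⟩ := hnear hpU
  have hgf : g p = conj (f p) := by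
    rw [hV] at hpV
    exact Complex.ext hpV.1.symm (by rw [conj_im, hpV.2, neg_neg])
  have hfp0 : f p ≠ 0 := fun h =>
    hp0 (hfgp (h.trans hf0.symm) (by rw [hgf, h, map_zero, hg0]))
  have hv₀ : (Q p, -P p) ≠ 0 := fun h => hp0 (hPQp (by simpa using h))
  have hkill : ∀ u, fderiv ℂ f p u = 0 → fderiv ℂ g p u = 0 → u = 0 := fun _ =>
    eq_zero_of_linearIndependent_pair (by simp) hindp
  have hTp : T p = conjEqLocus (fderiv ℂ f p : ℂ × ℂ →ₗ[ℂ] ℂ) (fderiv ℂ g p) := by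
    rw [hT, hF]; exact ker_fderiv_re_sub_im_add hfp.differentiableAt hgp.differentiableAt
  have hKp : K p = (ℂ ∙ (Q p, -P p)).restrictScalars ℝ := by
    subst hK
    exact congrArg (Submodule.restrictScalars ℝ) (ker_smul_fst_add_smul_snd hv₀)
  refine ⟨hTp ▸ fun v => conjEqLocus_isTotallyReal hkill, ?_, ?_⟩
  · rw [hTp, hKp]
    exact finrank_conjEqLocus_inf_span_singleton hkill hfp0 hv₀
      (conj_mul_fderiv_add_mul_fderiv_eq_zero hfp.differentiableAt hgp.differentiableAt hgf hintp)
  · exact hV ▸ isCompact_sep_norm_eq hUc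
      (fun q hq => (hnear hq).1.1.continuousAt.continuousWithinAt)
      (fun q hq => (hnear hq).1.2.continuousAt.continuousWithinAt) _

/-- If the foliation defined by `ω = x dy + y dx + ω̃` (here written
`ω = P dx + Q dy` with `P = y + h.o.t.`, `Q = x + h.o.t.`) admits a holomorphic
first integral `f·g` with `f, g` vanishing at `0` and in general position, then
`V = {Re f = Re g} ∩ {Im f = −Im g}` passes through `0`, is totally real off
the origin, has contact order one with the foliation off the origin, and the
leaves of the restricted foliation near `0` — the level sets of `|f|` in `V` —
are compact: the restriction is a center type singularity. -/
theorem totally_real_center_from_product_first_integral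
    (P Q : ℂ × ℂ → ℂ) (hP : AnalyticAt ℂ P 0) (hQ : AnalyticAt ℂ Q 0)
    (hPlin : (fun p : ℂ × ℂ => P p - p.2) =o[nhds (0 : ℂ × ℂ)] fun p => ‖p‖)
    (hQlin : (fun p : ℂ × ℂ => Q p - p.1) =o[nhds (0 : ℂ × ℂ)] fun p => ‖p‖)
    (f g : ℂ × ℂ → ℂ) (hf : AnalyticAt ℂ f 0) (hg : AnalyticAt ℂ g 0)
    (hf0 : f 0 = 0) (hg0 : g 0 = 0)
    (hgen : LinearIndependent ℂ ![fderiv ℂ f 0, fderiv ℂ g 0])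
    -- `f·g` is a first integral of `ω = P dx + Q dy` : `d(fg) ∧ ω = 0`
    (hint : ∀ᶠ p in nhds (0 : ℂ × ℂ),
      fderiv ℂ (fun q => f q * g q) p (1, 0) * Q p =
      fderiv ℂ (fun q => f q * g q) p (0, 1) * P p)
    (V : Set (ℂ × ℂ))
    (hV : V = {p | (f p).re = (g p).re} ∩ {p | (f p).im = -(g p).im})
    (F : ℂ × ℂ → ℝ × ℝ)
    (hF : F = fun p => ((f p - g p).re, (f p + g p).im))
    -- tangent space of `V` at `p` and tangent space of the foliation at `p`
    (T : ℂ × ℂ → Submodule ℝ (ℂ × ℂ))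
    (hT : T = fun p => LinearMap.ker
      ((fderiv ℝ F p : ℂ × ℂ →L[ℝ] ℝ × ℝ) : ℂ × ℂ →ₗ[ℝ] ℝ × ℝ))
    (K : ℂ × ℂ → Submodule ℝ (ℂ × ℂ))
    (hK : K = fun p => LinearMap.ker (LinearMap.restrictScalars ℝ
      (P p • LinearMap.fst ℂ ℂ ℂ + Q p • LinearMap.snd ℂ ℂ ℂ))) :
    (0 : ℂ × ℂ) ∈ V ∧
    ∃ U ∈ nhds (0 : ℂ × ℂ), ∀ p ∈ (V ∩ U) \ {0},
      -- `V` is totally real at `p`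
      (∀ v ∈ T p, I • v ∈ T p → v = 0) ∧
      -- contact order one with the foliation
      Module.finrank ℝ ↥(T p ⊓ K p) = 1 ∧
      -- the leaf of the restricted foliation through `p` is compact
      IsCompact {q ∈ V ∩ U | ‖f q‖ = ‖f p‖} :=
  totally_real_center_from_product_first_integral_general P Q hPlin hQlin f g hf hg hf0 hg0 hgen
    hint V hV F hF T hT K hK
end
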